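/- The subentropy function F is strictly concave on the probability simplex: for all λ, μ ∈ Δ_n with λ ≠ μ and all t ∈ (0,1), F(tλ + (1−t)μ) > t F(λ) + (1−t) F(μ). -/

import Mathlib

/-!
Up to the positive factor `n (n-1)!` and the constant `C_n`, the subentropy is
`Φ(λ) = ∫_S η(λ · x(y)) dy`, where `S` is the solid simplex in `ℝ^{n-1}` and
`x(y) = (y, 1 - Σ y)`. Since `λ ↦ λ · x(y)` is linear and `η` is strictly concave on `[0, ∞)`,
the integrand of `Φ` is concave in `λ`, strictly so wherever `λ · x(y) ≠ μ · x(y)`. For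
`λ ≠ μ` in the simplex, `y ↦ (λ - μ) · x(y)` is a nonconstant affine function, so it is nonzero
somewhere on the open interior of `S`, hence on a set of positive measure, and the concavity gap
integrates to something positive.
-/

open MeasureTheory Matrix
open scoped ComplexOrder

/-- η(y) = −y ln y (with ln 0 = 0 in Mathlib, so 0 ln 0 = 0). -/
noncomputable def eta (y : ℝ) : ℝ := -(y * Real.log y)

noncomputable def harmC (n : ℕ) : ℝ := ∑ k ∈ Finset.Icc 2 n, (1 : ℝ) / k

/-- Integral of a function over the probability simplex Δ_n with respect to the
normalized uniform measure dx = (n−1)! dx_1 ⋯ dx_{n−1}, realised in the coordinates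
(x_1, …, x_{n−1}), with x_n = 1 − (x_1 + ⋯ + x_{n−1}). -/
noncomputable def simplexIntegral (n : ℕ) (f : (Fin n → ℝ) → ℝ) : ℝ :=
  ((n - 1).factorial : ℝ) *
    ∫ y in {y : Fin (n - 1) → ℝ | (∀ i, 0 ≤ y i) ∧ ∑ i, y i ≤ 1},
      f (fun i => if h : (i : ℕ) < n - 1 then y ⟨(i : ℕ), h⟩ else 1 - ∑ j, y j)

noncomputable def subF (n : ℕ) (lam : Fin n → ℝ) : ℝ :=
  (n : ℝ) * simplexIntegral n (fun x => eta (∑ i, lam i * x i)) - harmC n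

/-- Subentropy of a (Hermitian) matrix: Q(ρ) = F(λ(ρ)), the subentropy of its
eigenvalue vector (junk value 0 for non-Hermitian matrices). -/
noncomputable def Qmat {ι : Type} [Fintype ι] [DecidableEq ι] (ρ : Matrix ι ι ℂ) : ℝ :=
  if h : ρ.IsHermitian then
    subF (Fintype.card ι) (fun k => h.eigenvalues ((Fintype.equivFin ι).symm k))
  else 0

open Real Finset Topology
open scoped Nat

theorem eta_eq_negMulLog : eta = negMulLog := by
  funext y
  simp [eta, negMulLog]

theorem setIntegral_lt_setIntegral_of_le_of_lt_on_isOpen {X : Type*} [TopologicalSpace X]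
    [MeasurableSpace X] {μ : Measure X} [μ.IsOpenPosMeasure] {f g : X → ℝ} {s U : Set X}
    (hs : MeasurableSet s) (hf : IntegrableOn f s μ) (hg : IntegrableOn g s μ)
    (hle : ∀ x ∈ s, f x ≤ g x) (hU : IsOpen U) (hUne : U.Nonempty) (hUs : U ⊆ s)
    (hlt : ∀ x ∈ U, f x < g x) : ∫ x in s, f x ∂μ < ∫ x in s, g x ∂μ := by
  rw [← sub_pos, ← integral_sub hg hf, setIntegral_pos_iff_support_of_nonneg_ae
    (ae_restrict_of_forall_mem hs fun x hx => sub_nonneg.2 (hle x hx)) (hg.sub hf)]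
  exact (hU.measure_pos μ hUne).trans_le
    (measure_mono fun x hx => ⟨(sub_pos.2 (hlt x hx)).ne', hUs hx⟩)

theorem IsOpen.exists_add_dotProduct_ne_zero {ι : Type*} [Fintype ι] {U : Set (ι → ℝ)}
    (hU : IsOpen U) (hUne : U.Nonempty) (a : ℝ) {c : ι → ℝ} (hc : c ≠ 0) :
    ∃ y ∈ U, a + c ⬝ᵥ y ≠ 0 := by
  obtain ⟨p, hp⟩ := hUne
  by_cases hap : a + c ⬝ᵥ p = 0
  swap
  · exact ⟨p, hp, hap⟩
  -- move off the zero set along the normal direction `c`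
  have hmem : ∀ᶠ ε in 𝓝[≠] (0 : ℝ), p + ε • c ∈ U ∧ ε ≠ 0 := by
    refine ((Filter.Tendsto.mono_left ?_ nhdsWithin_le_nhds).eventually (hU.mem_nhds hp)).and
      self_mem_nhdsWithin
    exact (continuous_const.add (continuous_id.smul continuous_const)).tendsto' 0 p (by simp)
  obtain ⟨ε, hεU, hε⟩ := hmem.exists
  refine ⟨_, hεU, ?_⟩
  rw [dotProduct_add, dotProduct_smul, ← add_assoc, hap, zero_add, smul_eq_mul]
  exact mul_ne_zero hε (mt dotProduct_self_eq_zero.1 hc)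

theorem sub_last_ne_zero_of_sum_eq_zero {m : ℕ} {d : Fin (m + 1) → ℝ} (hsum : ∑ i, d i = 0)
    (hd : d ≠ 0) : (fun j : Fin m => d j.castSucc - d (Fin.last m)) ≠ 0 := by
  intro hconst
  have hcast : ∀ j : Fin m, d j.castSucc = d (Fin.last m) := fun j =>
    sub_eq_zero.1 (congrFun hconst j)
  have hlast : d (Fin.last m) = 0 := by
    rw [Fin.sum_univ_castSucc] at hsum
    simp only [hcast, sum_const, card_univ, Fintype.card_fin, nsmul_eq_mul, ← add_one_mul] at hsum
    exact (mul_eq_zero.1 hsum).resolve_left (by positivity)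
  exact hd (funext fun i => Fin.lastCases hlast (fun j => (hcast j).trans hlast) i)

def solidSimplex (m : ℕ) : Set (Fin m → ℝ) := {y | (∀ i, 0 ≤ y i) ∧ ∑ i, y i ≤ 1}

theorem isCompact_solidSimplex (m : ℕ) : IsCompact (solidSimplex m) := by
  refine (isCompact_Icc (a := (0 : Fin m → ℝ)) (b := 1)).of_isClosed_subset ?_ ?_
  · show IsClosed ({y : Fin m → ℝ | 0 ≤ y} ∩ {y | ∑ i, y i ≤ 1})
    exact (isClosed_le continuous_const continuous_id).inter
      (isClosed_le (continuous_finsetSum _ fun j _ => continuous_apply j) continuous_const)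
  · exact fun y hy => ⟨hy.1, fun i => (single_le_sum (fun j _ => hy.1 j) (mem_univ i)).trans hy.2⟩

theorem interior_solidSimplex_nonempty (m : ℕ) : (interior (solidSimplex m)).Nonempty := by
  have hT : IsOpen ((⋂ i, {y : Fin m → ℝ | 0 < y i}) ∩ {y | ∑ i, y i < 1}) :=
    (isOpen_iInter_of_finite fun i => isOpen_lt continuous_const (continuous_apply i)).inter
      (isOpen_lt (continuous_finsetSum _ fun j _ => continuous_apply j) continuous_const)
  have hsub : (⋂ i, {y : Fin m → ℝ | 0 < y i}) ∩ {y | ∑ i, y i < 1} ⊆ solidSimplex m :=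
    fun y hy => ⟨fun i => (Set.mem_iInter.1 hy.1 i).le, hy.2.le⟩
  refine ⟨fun _ => 1 / (m + 1), interior_maximal hsub hT ⟨Set.mem_iInter.2 fun _ => ?_, ?_⟩⟩
  · show (0 : ℝ) < 1 / (m + 1)
    positivity
  show ∑ _i : Fin m, (1 : ℝ) / (m + 1) < 1
  rw [sum_const, card_univ, Fintype.card_fin, nsmul_eq_mul, mul_one_div,
    div_lt_one (by positivity)]
  linarith

def simplexLift {m : ℕ} (y : Fin m → ℝ) : Fin (m + 1) → ℝ := Fin.snoc y (1 - ∑ i, y i)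

theorem continuous_simplexLift (m : ℕ) : Continuous (simplexLift (m := m)) :=
  (continuous_id (X := Fin m → ℝ)).finSnoc
    (continuous_const.sub (continuous_finsetSum _ fun j _ => continuous_apply j))

theorem simplexLift_mem_stdSimplex {m : ℕ} {y : Fin m → ℝ} (hy : y ∈ solidSimplex m) :
    simplexLift y ∈ stdSimplex ℝ (Fin (m + 1)) := by
  refine ⟨fun i => ?_, by simp [simplexLift, Fin.sum_univ_castSucc]⟩
  induction i using Fin.lastCases with
  | last => simpa [simplexLift] using hy.2
  | cast j => simpa [simplexLift] using hy.1 j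

theorem dotProduct_simplexLift {m : ℕ} (v : Fin (m + 1) → ℝ) (y : Fin m → ℝ) :
    v ⬝ᵥ simplexLift y = v (Fin.last m) + (fun j => v j.castSucc - v (Fin.last m)) ⬝ᵥ y := by
  simp only [dotProduct, simplexLift, Fin.sum_univ_castSucc, Fin.snoc_castSucc, Fin.snoc_last,
    sub_mul, sum_sub_distrib, mul_sub, mul_sum]
  ring

theorem simplexIntegral_succ (m : ℕ) (f : (Fin (m + 1) → ℝ) → ℝ) :
    simplexIntegral (m + 1) f = m ! * ∫ y in solidSimplex m, f (simplexLift y) :=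
  rfl

theorem integrableOn_negMulLog_dotProduct_simplexLift (m : ℕ) (v : Fin (m + 1) → ℝ) :
    IntegrableOn (fun y => negMulLog (v ⬝ᵥ simplexLift y)) (solidSimplex m) :=
  (continuous_negMulLog.comp (continuous_const.dotProduct (continuous_simplexLift m))).continuousOn
    |>.integrableOn_compact (isCompact_solidSimplex m)

theorem exists_mem_interior_dotProduct_simplexLift_ne {m : ℕ} {lam mu : Fin (m + 1) → ℝ}
    (hsum : ∑ i, lam i = ∑ i, mu i) (hne : lam ≠ mu) :
    ∃ y ∈ interior (solidSimplex m), lam ⬝ᵥ simplexLift y ≠ mu ⬝ᵥ simplexLift y := by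
  have hd : ∑ i, (lam - mu) i = 0 := by simp [sum_sub_distrib, hsum]
  obtain ⟨y, hy, hy0⟩ := isOpen_interior.exists_add_dotProduct_ne_zero
    (interior_solidSimplex_nonempty m) _ (sub_last_ne_zero_of_sum_eq_zero hd (sub_ne_zero.2 hne))
  refine ⟨y, hy, fun h => hy0 ?_⟩
  rw [← dotProduct_simplexLift, sub_dotProduct, h, sub_self]

noncomputable def subentropyIntegral (m : ℕ) (v : Fin (m + 1) → ℝ) : ℝ :=
  ∫ y in solidSimplex m, negMulLog (v ⬝ᵥ simplexLift y)

theorem subF_succ (m : ℕ) (v : Fin (m + 1) → ℝ) :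
    subF (m + 1) v = (m + 1 : ℕ) * (m ! * subentropyIntegral m v) - harmC (m + 1) := by
  rw [subF, simplexIntegral_succ, eta_eq_negMulLog]
  rfl

theorem strictConcaveOn_subentropyIntegral (m : ℕ) :
    StrictConcaveOn ℝ (stdSimplex ℝ (Fin (m + 1))) (subentropyIntegral m) := by
  refine ⟨convex_stdSimplex ℝ _, fun lam hlam mu hmu hne a b ha hb hab => ?_⟩
  have hint := integrableOn_negMulLog_dotProduct_simplexLift m
  have hcomb : ∀ y, (a • lam + b • mu) ⬝ᵥ simplexLift y =
      a • (lam ⬝ᵥ simplexLift y) + b • (mu ⬝ᵥ simplexLift y) := fun y => by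
    rw [add_dotProduct, smul_dotProduct, smul_dotProduct]
  have hmem : ∀ v ∈ stdSimplex ℝ (Fin (m + 1)), ∀ y ∈ solidSimplex m,
      v ⬝ᵥ simplexLift y ∈ Set.Ici 0 := fun v hv y hy =>
    Set.mem_Ici.2 (dotProduct_nonneg_of_nonneg hv.1 (simplexLift_mem_stdSimplex hy).1)
  have hcont : ∀ v : Fin (m + 1) → ℝ, Continuous fun y => v ⬝ᵥ simplexLift y := fun v =>
    continuous_const.dotProduct (continuous_simplexLift m)
  have hle : ∀ y ∈ solidSimplex m,
      a * negMulLog (lam ⬝ᵥ simplexLift y) + b * negMulLog (mu ⬝ᵥ simplexLift y) ≤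
        negMulLog ((a • lam + b • mu) ⬝ᵥ simplexLift y) := fun y hy => by
    simpa only [hcomb, smul_eq_mul] using
      concaveOn_negMulLog.2 (hmem lam hlam y hy) (hmem mu hmu y hy) ha.le hb.le hab
  have hlt : ∀ y ∈ solidSimplex m, lam ⬝ᵥ simplexLift y ≠ mu ⬝ᵥ simplexLift y →
      a * negMulLog (lam ⬝ᵥ simplexLift y) + b * negMulLog (mu ⬝ᵥ simplexLift y) <
        negMulLog ((a • lam + b • mu) ⬝ᵥ simplexLift y) := fun y hy hne => by
    simpa only [hcomb, smul_eq_mul] using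
      strictConcaveOn_negMulLog.2 (hmem lam hlam y hy) (hmem mu hmu y hy) hne ha hb hab
  obtain ⟨z, hz_int, hz⟩ :=
    exists_mem_interior_dotProduct_simplexLift_ne (hlam.2.trans hmu.2.symm) hne
  have hintegral := setIntegral_lt_setIntegral_of_le_of_lt_on_isOpen
    (isCompact_solidSimplex m).isClosed.measurableSet
    (((hint lam).const_mul a).fun_add ((hint mu).const_mul b)) (hint (a • lam + b • mu)) hle
    (isOpen_interior.inter (isOpen_ne_fun (hcont lam) (hcont mu))) ⟨z, hz_int, hz⟩
    (fun y hy => interior_subset hy.1) (fun y hy => hlt y (interior_subset hy.1) hy.2)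
  rw [integral_add ((hint lam).const_mul a) ((hint mu).const_mul b), integral_const_mul,
    integral_const_mul] at hintegral
  simpa only [smul_eq_mul, subentropyIntegral] using hintegral

/-- the subentropy function F is strictly concave on the probability simplex. -/
theorem subF_strictConcave (n : ℕ) (lam mu : Fin n → ℝ)
    (hlam : lam ∈ stdSimplex ℝ (Fin n)) (hmu : mu ∈ stdSimplex ℝ (Fin n))
    (hne : lam ≠ mu) (t : ℝ) (ht0 : 0 < t) (ht1 : t < 1) :
    t * subF n lam + (1 - t) * subF n mu < subF n (t • lam + (1 - t) • mu) := by
  obtain ⟨m, rfl⟩ : ∃ m, n = m + 1 :=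
    Nat.exists_eq_succ_of_ne_zero (by rintro rfl; simpa using hlam.2)
  have hconcave := (strictConcaveOn_subentropyIntegral m).2 hlam hmu hne ht0 (sub_pos.2 ht1)
    (add_sub_cancel t 1)
  rw [smul_eq_mul, smul_eq_mul] at hconcave
  have hscale : (0 : ℝ) < (m + 1 : ℕ) * m ! := by positivity
  simp only [subF_succ]
  linarith [mul_lt_mul_of_pos_left hconcave hscale]
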